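/- (Offline-to-online preference variance bound, core of Theorem 2.) Let π₁ and π₂ be probability measures on a measurable space Y, and let r₁, r₂, r* : Y → ℝ be bounded measurable functions. Define p_k(y, y') = σ(r_k(y) − r_k(y')) for k = 1, 2, where σ is the sigmoid function. Then Var_{π₁⊗π₁}(p₁) ≤ Var_{π₂⊗π₂}(p₂) + 2·sup_y |r₁(y) − r*(y)| + 2·sup_y |r₂(y) − r*(y)| + 6·TV(π₁ ⊗ π₁, π₂ ⊗ π₂). -/

import Mathlib

open MeasureTheory

/-- The sigmoid function `σ(z) = 1 / (1 + exp (-z))`. -/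
noncomputable def sigmoid (z : ℝ) : ℝ := 1 / (1 + Real.exp (-z))

/-- Variance of a real-valued function: `∫ U² dμ - (∫ U dμ)²`. -/
noncomputable def Var {Ω : Type*} [MeasurableSpace Ω] (μ : Measure Ω) (U : Ω → ℝ) : ℝ :=
  (∫ ω, (U ω) ^ 2 ∂μ) - (∫ ω, U ω ∂μ) ^ 2

/-- Total variation distance: supremum over measurable sets of `|μ A - ν A|`. -/
noncomputable def tvDist {Ω : Type*} [MeasurableSpace Ω] (μ ν : Measure Ω) : ℝ :=
  ⨆ A : {A : Set Ω // MeasurableSet A}, |(μ A.1).toReal - (ν A.1).toReal|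

/-!
The sigmoid is `1/4`-Lipschitz, so if `|r₁ - r₂| ≤ D₁ + D₂` pointwise (with `Dₖ = sup |rₖ - r*|`),
the preferences `p₁, p₂` differ pointwise by at most `(D₁ + D₂) / 2`. As `p₁, p₂` and their means
lie in `[0, 1]`, where `|a² - b²| ≤ 2 |a - b|`, both `E p²` and `(E p)²` move by at most `D₁ + D₂`.
Changing the measure moves the mean of a `[0, 1]`-valued function by at most the total variation
distance (layer cake formula), hence the variance by at most three times that distance.
-/

lemma sigmoid_eq_real_sigmoid : sigmoid = Real.sigmoid := by
  funext z
  simp [sigmoid, Real.sigmoid_def]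

lemma Real.lipschitzWith_sigmoid : LipschitzWith 4⁻¹ Real.sigmoid := by
  refine lipschitzWith_of_nnnorm_deriv_le differentiable_sigmoid fun x => ?_
  have h0 := Real.sigmoid_nonneg x
  have h1 := Real.sigmoid_le_one x
  rw [← NNReal.coe_le_coe, coe_nnnorm, Real.deriv_sigmoid, Real.norm_eq_abs,
    abs_of_nonneg (mul_nonneg h0 (by linarith))]
  push_cast
  nlinarith [sq_nonneg (Real.sigmoid x - 1 / 2)]

lemma Real.abs_sigmoid_le_one (z : ℝ) : |Real.sigmoid z| ≤ 1 :=
  abs_le.2 ⟨by linarith [Real.sigmoid_nonneg z], Real.sigmoid_le_one z⟩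

lemma Real.abs_sigmoid_sub_sigmoid_le (a b : ℝ) :
    |Real.sigmoid a - Real.sigmoid b| ≤ |a - b| / 4 := by
  have h := Real.lipschitzWith_sigmoid.dist_le_mul a b
  rw [Real.dist_eq, Real.dist_eq] at h
  push_cast at h
  linarith

lemma abs_sigmoid_sub_sub_sigmoid_sub_le {Y : Type*} {r s : Y → ℝ} {D : ℝ}
    (h : ∀ y, |r y - s y| ≤ D) (y y' : Y) :
    |Real.sigmoid (r y - r y') - Real.sigmoid (s y - s y')| ≤ D / 2 := by
  have hsplit : |(r y - r y') - (s y - s y')| ≤ |r y - s y| + |r y' - s y'| := by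
    rw [show (r y - r y') - (s y - s y') = (r y - s y) - (r y' - s y') by ring]
    exact abs_sub _ _
  linarith [Real.abs_sigmoid_sub_sigmoid_le (r y - r y') (s y - s y'), h y, h y']

lemma measurable_sigmoid_sub {Y : Type*} [MeasurableSpace Y] {r : Y → ℝ} (hr : Measurable r) :
    Measurable fun yy : Y × Y => Real.sigmoid (r yy.1 - r yy.2) :=
  continuous_sigmoid.measurable.comp ((hr.comp measurable_fst).sub (hr.comp measurable_snd))

lemma abs_sub_le_iSup_abs_sub {Y : Type*} {r s : Y → ℝ} (hr : ∃ B, ∀ y, |r y| ≤ B)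
    (hs : ∃ B, ∀ y, |s y| ≤ B) (y : Y) : |r y - s y| ≤ ⨆ y, |r y - s y| := by
  obtain ⟨B, hB⟩ := hr
  obtain ⟨C, hC⟩ := hs
  refine le_ciSup (f := fun y => |r y - s y|) ⟨B + C, ?_⟩ y
  rintro _ ⟨z, rfl⟩
  exact (abs_sub _ _).trans (add_le_add (hB z) (hC z))

lemma abs_sq_sub_sq_le {a b : ℝ} (ha : |a| ≤ 1) (hb : |b| ≤ 1) :
    |a ^ 2 - b ^ 2| ≤ 2 * |a - b| := by
  rw [sq_sub_sq, abs_mul]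
  exact mul_le_mul_of_nonneg_right ((abs_add_le a b).trans (by linarith)) (abs_nonneg _)

section Integrals

variable {Ω : Type*} [MeasurableSpace Ω] {μ ν : Measure Ω}

lemma tvDist_nonneg : 0 ≤ tvDist μ ν :=
  Real.iSup_nonneg fun _ => abs_nonneg _

lemma abs_measureReal_le_measureReal_univ [IsFiniteMeasure μ] (s : Set Ω) :
    |μ.real s| ≤ μ.real Set.univ := by
  rw [abs_of_nonneg measureReal_nonneg]
  exact measureReal_mono (Set.subset_univ s)

lemma abs_measureReal_sub_le_tvDist [IsFiniteMeasure μ] [IsFiniteMeasure ν] {A : Set Ω}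
    (hA : MeasurableSet A) : |μ.real A - ν.real A| ≤ tvDist μ ν := by
  refine le_ciSup (f := fun B : {A : Set Ω // MeasurableSet A} => |μ.real B.1 - ν.real B.1|)
    ⟨μ.real Set.univ + ν.real Set.univ, ?_⟩ ⟨A, hA⟩
  rintro _ ⟨B, rfl⟩
  exact (abs_sub _ _).trans (add_le_add (abs_measureReal_le_measureReal_univ B.1)
    (abs_measureReal_le_measureReal_univ B.1))

lemma integrable_of_abs_le [IsFiniteMeasure μ] {u : Ω → ℝ} {C : ℝ}
    (hu : AEStronglyMeasurable u μ) (hC : ∀ x, |u x| ≤ C) : Integrable u μ :=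
  Integrable.of_bound hu C (ae_of_all _ hC)

lemma abs_integral_le_of_abs_le [IsProbabilityMeasure μ] {u : Ω → ℝ} {C : ℝ}
    (hu : ∀ x, |u x| ≤ C) : |∫ x, u x ∂μ| ≤ C := by
  simpa using norm_integral_le_of_norm_le_const (μ := μ) (f := u) (ae_of_all _ hu)

/-- By the layer cake formula both integrals are averages over `t ∈ (0, 1]` of the masses of
`{t ≤ g}`. -/
lemma abs_integral_sub_integral_le_tvDist [IsFiniteMeasure μ] [IsFiniteMeasure ν] {g : Ω → ℝ}
    (hg : Measurable g) (hg0 : ∀ x, 0 ≤ g x) (hg1 : ∀ x, g x ≤ 1) :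
    |∫ x, g x ∂μ - ∫ x, g x ∂ν| ≤ tvDist μ ν := by
  have hlayer : ∀ (m : Measure Ω) [IsFiniteMeasure m], ∫ x, g x ∂m =
      ∫ t in Set.Ioc 0 1, m.real {a | t ≤ g a} := fun m _ =>
    (integrable_of_abs_le hg.aestronglyMeasurable fun x => abs_le.2 ⟨by linarith [hg0 x],
      hg1 x⟩).integral_eq_integral_Ioc_meas_le (ae_of_all _ hg0) (ae_of_all _ hg1)
  have hint : ∀ (m : Measure Ω) [IsFiniteMeasure m],
      IntegrableOn (fun t => m.real {a | t ≤ g a}) (Set.Ioc 0 1) := fun m _ => by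
    have hanti : Antitone fun t => m.real {a | t ≤ g a} :=
      fun s t hst => measureReal_mono fun a ha => hst.trans ha
    exact Measure.integrableOn_of_bounded (M := m.real Set.univ) (by simp)
      hanti.measurable.aestronglyMeasurable
      (ae_of_all _ fun _ => abs_measureReal_le_measureReal_univ _)
  rw [hlayer μ, hlayer ν, ← integral_sub (hint μ) (hint ν)]
  simpa using norm_setIntegral_le_of_norm_le_const
    (f := fun t => μ.real {a | t ≤ g a} - ν.real {a | t ≤ g a})
    (measure_Ioc_lt_top (μ := volume) (a := (0 : ℝ)) (b := 1))
    fun t _ => abs_measureReal_sub_le_tvDist (measurableSet_le measurable_const hg)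

lemma var_le_var_add {f g : Ω → ℝ} (hf : |∫ x, f x ∂μ| ≤ 1)
    (hg : |∫ x, g x ∂ν| ≤ 1) :
    Var μ f ≤ Var ν g + |∫ x, f x ^ 2 ∂μ - ∫ x, g x ^ 2 ∂ν| +
      2 * |∫ x, f x ∂μ - ∫ x, g x ∂ν| := by
  have hmeans := abs_sq_sub_sq_le hf hg
  unfold Var
  linarith [le_abs_self (∫ x, f x ^ 2 ∂μ - ∫ x, g x ^ 2 ∂ν),
    neg_abs_le ((∫ x, f x ∂μ) ^ 2 - (∫ x, g x ∂ν) ^ 2)]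

lemma var_le_var_add_of_abs_sub_le [IsProbabilityMeasure μ] {f g : Ω → ℝ} {ε : ℝ}
    (hf : AEStronglyMeasurable f μ) (hg : AEStronglyMeasurable g μ)
    (hf1 : ∀ x, |f x| ≤ 1) (hg1 : ∀ x, |g x| ≤ 1) (hfg : ∀ x, |f x - g x| ≤ ε) :
    Var μ f ≤ Var μ g + 4 * ε := by
  have habs_sq : ∀ {u : Ω → ℝ}, (∀ x, |u x| ≤ 1) → ∀ x, |u x ^ 2| ≤ 1 := fun hu x =>
    (abs_pow _ 2).trans_le (pow_le_one₀ (abs_nonneg _) (hu x))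
  have hsq : |∫ x, f x ^ 2 ∂μ - ∫ x, g x ^ 2 ∂μ| ≤ 2 * ε := by
    rw [← integral_sub
      (integrable_of_abs_le (u := fun x => f x ^ 2) (hf.pow 2) (habs_sq hf1))
      (integrable_of_abs_le (u := fun x => g x ^ 2) (hg.pow 2) (habs_sq hg1))]
    exact abs_integral_le_of_abs_le fun x =>
      (abs_sq_sub_sq_le (hf1 x) (hg1 x)).trans (by linarith [hfg x])
  have hmean : |∫ x, f x ∂μ - ∫ x, g x ∂μ| ≤ ε := by
    rw [← integral_sub (integrable_of_abs_le hf hf1) (integrable_of_abs_le hg hg1)]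
    exact abs_integral_le_of_abs_le hfg
  linarith [var_le_var_add (abs_integral_le_of_abs_le (μ := μ) hf1)
    (abs_integral_le_of_abs_le (μ := μ) hg1)]

lemma var_le_var_add_three_mul_tvDist [IsProbabilityMeasure μ] [IsProbabilityMeasure ν]
    {g : Ω → ℝ} (hg : Measurable g) (hg0 : ∀ x, 0 ≤ g x) (hg1 : ∀ x, g x ≤ 1) :
    Var μ g ≤ Var ν g + 3 * tvDist μ ν := by
  have habs : ∀ x, |g x| ≤ 1 := fun x => abs_le.2 ⟨by linarith [hg0 x], hg1 x⟩
  have hsq := abs_integral_sub_integral_le_tvDist (μ := μ) (ν := ν) (hg.pow_const 2)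
    (fun x => sq_nonneg _) (fun x => pow_le_one₀ (hg0 x) (hg1 x))
  have hmean := abs_integral_sub_integral_le_tvDist (μ := μ) (ν := ν) hg hg0 hg1
  linarith [var_le_var_add (abs_integral_le_of_abs_le (μ := μ) habs)
    (abs_integral_le_of_abs_le (μ := ν) habs)]

end Integrals

theorem offline_to_online_pvar_bound_general {Y : Type*} [MeasurableSpace Y]
    (π₁ π₂ : Measure Y) [IsProbabilityMeasure π₁] [IsProbabilityMeasure π₂]
    (r₁ r₂ rstar : Y → ℝ)
    (hr₁ : Measurable r₁) (hr₂ : Measurable r₂)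
    (hb₁ : ∃ B, ∀ y, |r₁ y| ≤ B) (hb₂ : ∃ B, ∀ y, |r₂ y| ≤ B)
    (hbstar : ∃ B, ∀ y, |rstar y| ≤ B) :
    Var (π₁.prod π₁) (fun yy => sigmoid (r₁ yy.1 - r₁ yy.2)) ≤
      Var (π₂.prod π₂) (fun yy => sigmoid (r₂ yy.1 - r₂ yy.2)) +
      2 * (⨆ y, |r₁ y - rstar y|) + 2 * (⨆ y, |r₂ y - rstar y|) +
      6 * tvDist (π₁.prod π₁) (π₂.prod π₂) := by
  rw [sigmoid_eq_real_sigmoid]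
  set D₁ := ⨆ y, |r₁ y - rstar y|
  set D₂ := ⨆ y, |r₂ y - rstar y|
  have hr₁₂ : ∀ y, |r₁ y - r₂ y| ≤ D₁ + D₂ := fun y =>
    (abs_sub_le _ (rstar y) _).trans (add_le_add (abs_sub_le_iSup_abs_sub hb₁ hbstar y)
      (abs_sub_comm (r₂ y) (rstar y) ▸ abs_sub_le_iSup_abs_sub hb₂ hbstar y))
  have hreward := var_le_var_add_of_abs_sub_le (μ := π₁.prod π₁)
    (measurable_sigmoid_sub hr₁).aestronglyMeasurable
    (measurable_sigmoid_sub hr₂).aestronglyMeasurable (fun _ => Real.abs_sigmoid_le_one _)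
    (fun _ => Real.abs_sigmoid_le_one _)
    fun yy => abs_sigmoid_sub_sub_sigmoid_sub_le hr₁₂ yy.1 yy.2
  have hshift := var_le_var_add_three_mul_tvDist (μ := π₁.prod π₁) (ν := π₂.prod π₂)
    (measurable_sigmoid_sub hr₂) (fun _ => Real.sigmoid_nonneg _) fun _ => Real.sigmoid_le_one _
  linarith [tvDist_nonneg (μ := π₁.prod π₁) (ν := π₂.prod π₂)]

/-- Offline-to-online preference variance bound (core of Theorem 2). -/
theorem offline_to_online_pvar_bound {Y : Type*} [MeasurableSpace Y]
    (π₁ π₂ : Measure Y) [IsProbabilityMeasure π₁] [IsProbabilityMeasure π₂]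
    (r₁ r₂ rstar : Y → ℝ)
    (hr₁ : Measurable r₁) (hr₂ : Measurable r₂) (hrstar : Measurable rstar)
    (hb₁ : ∃ B, ∀ y, |r₁ y| ≤ B) (hb₂ : ∃ B, ∀ y, |r₂ y| ≤ B)
    (hbstar : ∃ B, ∀ y, |rstar y| ≤ B) :
    Var (π₁.prod π₁) (fun yy => sigmoid (r₁ yy.1 - r₁ yy.2)) ≤
      Var (π₂.prod π₂) (fun yy => sigmoid (r₂ yy.1 - r₂ yy.2)) +
      2 * (⨆ y, |r₁ y - rstar y|) + 2 * (⨆ y, |r₂ y - rstar y|) +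
      6 * tvDist (π₁.prod π₁) (π₂.prod π₂) :=
  offline_to_online_pvar_bound_general π₁ π₂ r₁ r₂ rstar hr₁ hr₂ hb₁ hb₂ hbstar
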